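/- Let δ' be a length metric on the compactified regular tree 𝒯_n such that the boundary is at finite distance from a fixed vertex x₀, and define h(r) = min{δ'-length of e : e an edge at combinatorial distance r from x₀}. Then h is a Floyd function, i.e. ∑_{r} h(r) < ∞. -/

import Mathlib

open SimpleGraph

/-!
Walk along the geodesic ray `y` from `x₀`. Its `r`-th edge lies at combinatorial distance `r`
from `x₀`, so `h(r)` is at most its length, while the lengths of the first `N` edges add up to
the distance from `x₀` to `y N`, which converges to the finite distance from `x₀` to the
boundary point `p`.
-/

namespace SimpleGraph

variable {V : Type*} {G : SimpleGraph V} {y : ℕ → V}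

def IsGeodesicRay (G : SimpleGraph V) (y : ℕ → V) : Prop :=
  ∀ i j : ℕ, (G.dist (y i) (y j) : ℤ) = |(i : ℤ) - (j : ℤ)|

namespace IsGeodesicRay

theorem dist_eq (hy : G.IsGeodesicRay y) (i j : ℕ) :
    G.dist (y i) (y j) = ((i : ℤ) - j).natAbs := by
  have h := hy i j
  rw [Int.abs_eq_natAbs] at h
  exact_mod_cast h

theorem dist_zero_left (hy : G.IsGeodesicRay y) (r : ℕ) : G.dist (y 0) (y r) = r := by
  rw [hy.dist_eq]
  omega

theorem adj (hy : G.IsGeodesicRay y) (r : ℕ) : G.Adj (y r) (y (r + 1)) := by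
  rw [← G.dist_eq_one_iff_adj, hy.dist_eq]
  omega

theorem injective (hy : G.IsGeodesicRay y) : Function.Injective y := by
  intro i j hij
  have h := hy.dist_eq i j
  rw [hij, dist_self] at h
  omega

def dart (hy : G.IsGeodesicRay y) (r : ℕ) : G.Dart := ⟨(y r, y (r + 1)), hy.adj r⟩

theorem min_dist_dart (hy : G.IsGeodesicRay y) (r : ℕ) :
    min (G.dist (y 0) (hy.dart r).toProd.1) (G.dist (y 0) (hy.dart r).toProd.2) = r := by
  simp only [dart, hy.dist_zero_left]
  omega

def walk (hy : G.IsGeodesicRay y) : (N : ℕ) → G.Walk (y 0) (y N)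
  | 0 => .nil
  | N + 1 => (hy.walk N).concat (hy.adj N)

theorem support_walk (hy : G.IsGeodesicRay y) (N : ℕ) :
    (hy.walk N).support = (List.range (N + 1)).map y := by
  induction N with
  | zero => simp [walk]
  | succ N ih => rw [walk, Walk.support_concat, ih, List.range_succ (n := N + 1)]; simp

theorem isPath_walk (hy : G.IsGeodesicRay y) (N : ℕ) : (hy.walk N).IsPath := by
  rw [Walk.isPath_def, support_walk]
  exact List.nodup_range.map hy.injective

theorem sum_darts_walk {M : Type*} [AddCommMonoid M] (hy : G.IsGeodesicRay y)
    (ℓ : G.Dart → M) (N : ℕ) :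
    ((hy.walk N).darts.map ℓ).sum = ∑ r ∈ Finset.range N, ℓ (hy.dart r) := by
  induction N with
  | zero => simp [walk]
  | succ N ih =>
    rw [walk, Walk.darts_concat, Finset.sum_range_succ, ← ih]
    simp [dart]

theorem summable_of_tendsto {X : Type*} [PseudoMetricSpace X] (hy : G.IsGeodesicRay y)
    (ι : V → X) (ℓ : G.Dart → ℝ) (hℓ : ∀ d, 0 ≤ ℓ d)
    (hdist : ∀ (x z : V) (w : G.Walk x z), w.IsPath → Dist.dist (ι x) (ι z) = (w.darts.map ℓ).sum)
    {p : X} (hconv : Filter.Tendsto (fun i => ι (y i)) Filter.atTop (nhds p)) :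
    Summable fun r => ℓ (hy.dart r) := by
  have partial_sum : ∀ N, ∑ r ∈ Finset.range N, ℓ (hy.dart r) = Dist.dist (ι (y 0)) (ι (y N)) :=
    fun N => by rw [← sum_darts_walk, hdist _ _ _ (hy.isPath_walk N)]
  refine ⟨Dist.dist (ι (y 0)) p, (hasSum_iff_tendsto_nat_of_nonneg (fun r => hℓ _) _).2 ?_⟩
  simp only [partial_sum]
  exact (tendsto_const_nhds.dist Filter.tendsto_id).comp hconv

end IsGeodesicRay

end SimpleGraph

theorem min_edge_length_is_floyd_function_general
    {V : Type*} (G : SimpleGraph V)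
    (x₀ : V)
    {X : Type*} [MetricSpace X] (ι : V → X)
    (ℓ : G.Dart → ℝ) (hℓpos : ∀ d, 0 < ℓ d)
    (hdist : ∀ (x y : V) (w : G.Walk x y), w.IsPath →
      dist (ι x) (ι y) = (w.darts.map ℓ).sum)
    (y : ℕ → V) (hy0 : y 0 = x₀)
    (hygeo : ∀ i j : ℕ, (G.dist (y i) (y j) : ℤ) = |(i : ℤ) - (j : ℤ)|)
    (p : X) (hconv : Filter.Tendsto (fun i : ℕ => ι (y i)) Filter.atTop (nhds p)) :
    Summable (fun r : ℕ =>
      sInf {L : ℝ | ∃ d : G.Dart,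
        min (G.dist x₀ d.toProd.1) (G.dist x₀ d.toProd.2) = r ∧ L = ℓ d}) := by
  have hy : G.IsGeodesicRay y := hygeo
  have hℓ : ∀ d, 0 ≤ ℓ d := fun d => (hℓpos d).le
  subst hy0
  refine (hy.summable_of_tendsto ι ℓ hℓ hdist hconv).of_nonneg_of_le (fun r => ?_) (fun r => ?_)
  · exact Real.sInf_nonneg (by rintro L ⟨d, -, rfl⟩; exact hℓ d)
  · exact csInf_le ⟨0, by rintro L ⟨d, -, rfl⟩; exact hℓ d⟩ ⟨hy.dart r, hy.min_dist_dart r, rfl⟩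

/-- Let `δ'` be a length metric on the compactified regular tree (modelled as a
metric space `X` containing the tree, with edge lengths `ℓ` and vertex distances
given by sums of edge lengths along paths), such that some boundary point `p` is
at finite distance from the base vertex `x₀` (there is a geodesic ray from `x₀`
converging in `X`). Then `h(r) := inf` of the `δ'`-lengths of edges at
combinatorial distance `r` from `x₀` is a Floyd function: `∑ h(r) < ∞`. -/
theorem min_edge_length_is_floyd_function
    {V : Type*} (G : SimpleGraph V) [G.LocallyFinite] (hT : G.IsTree)
    (n : ℕ) (hn : 3 ≤ n) (hreg : ∀ v : V, G.degree v = n) (x₀ : V)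
    {X : Type*} [MetricSpace X] (ι : V → X)
    (ℓ : G.Dart → ℝ) (hℓpos : ∀ d, 0 < ℓ d) (hℓsymm : ∀ d : G.Dart, ℓ d.symm = ℓ d)
    (hdist : ∀ (x y : V) (w : G.Walk x y), w.IsPath →
      dist (ι x) (ι y) = (w.darts.map ℓ).sum)
    (y : ℕ → V) (hy0 : y 0 = x₀)
    (hygeo : ∀ i j : ℕ, (G.dist (y i) (y j) : ℤ) = |(i : ℤ) - (j : ℤ)|)
    (p : X) (hconv : Filter.Tendsto (fun i : ℕ => ι (y i)) Filter.atTop (nhds p)) :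
    Summable (fun r : ℕ =>
      sInf {L : ℝ | ∃ d : G.Dart,
        min (G.dist x₀ d.toProd.1) (G.dist x₀ d.toProd.2) = r ∧ L = ℓ d}) :=
  min_edge_length_is_floyd_function_general G x₀ ι ℓ hℓpos hdist y hy0 hygeo p hconv
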